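/- With the generalized Grushin structure ($\gamma>0$, $Q = n+(1+\gamma)k$) and gauge $\rho$ as above, for every smooth $f:(0,\infty)\to\mathbb{R}$ the Grushin sub-Laplacian $\Delta_{\mathcal{X}} = \Delta_x + |x|^{2\gamma}\Delta_y$ satisfies, at points with $x\neq 0$, $\rho\neq 0$: $\Delta_{\mathcal{X}}f(\rho) = \frac{|x|^{2\gamma}}{\rho^{2\gamma}}\Big(f''(\rho) + \frac{Q-1}{\rho}f'(\rho)\Big)$. -/

import Mathlib

noncomputable section

/-- Euclidean norm of a vector in `ℝⁿ`. -/
def nrm {n : ℕ} (v : Fin n → ℝ) : ℝ := Real.sqrt (∑ i, v i ^ 2)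

/-- Generalized Grushin gauge
`ρ(x,y) = (|x|^{2(1+γ)} + (1+γ)²|y|²)^{1/(2+2γ)}` on `ℝⁿ × ℝᵏ`. -/
def rhoGru (n k : ℕ) (γ : ℝ) (x : Fin n → ℝ) (y : Fin k → ℝ) : ℝ :=
  (nrm x ^ (2 * (1 + γ)) + (1 + γ) ^ 2 * nrm y ^ 2) ^ (1 / (2 + 2 * γ))

/-- Grushin sub-Laplacian `Δ_𝒳 = Δₓ + |x|^{2γ}Δ_y` on `ℝⁿ × ℝᵏ`. -/
def DeltaGru {n k : ℕ} (γ : ℝ) (u : (Fin n → ℝ) → (Fin k → ℝ) → ℝ)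
    (x : Fin n → ℝ) (y : Fin k → ℝ) : ℝ :=
  (∑ i, deriv (deriv fun s => u (Function.update x i s) y) (x i))
    + nrm x ^ (2 * γ) * ∑ j, deriv (deriv fun s => u x (Function.update y j s)) (y j)

open Real Set Filter

lemma chain2' {f w : ℝ → ℝ} (hf : ContDiffOn ℝ (⊤ : ℕ∞) f (Set.Ioi 0))
    {U : Set ℝ} (hU : IsOpen U) {a : ℝ} (ha : a ∈ U)
    (hw : ContDiffOn ℝ 2 w U) (hwpos : ∀ s ∈ U, 0 < w s) :
    deriv (deriv (fun s => f (w s))) a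
      = deriv (deriv f) (w a) * (deriv w a)^2 + deriv f (w a) * deriv (deriv w) a := by
  have hfd : DifferentiableOn ℝ f (Set.Ioi 0) := hf.differentiableOn (by simp)
  have hdf : ContDiffOn ℝ (⊤ : ℕ∞) (deriv f) (Set.Ioi 0) := hf.deriv_of_isOpen isOpen_Ioi (by simp)
  have hwd : DifferentiableOn ℝ w U := hw.differentiableOn (by norm_num)
  have hdw : ContDiffOn ℝ 1 (deriv w) U := hw.deriv_of_isOpen hU (by norm_num)
  have hev : (fun s => deriv (fun t => f (w t)) s) =ᶠ[nhds a] fun s => deriv f (w s) * deriv w s := by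
    filter_upwards [hU.mem_nhds ha] with s hs
    have h1 : DifferentiableAt ℝ f (w s) :=
      hfd.differentiableAt (isOpen_Ioi.mem_nhds (hwpos s hs))
    have h2 : DifferentiableAt ℝ w s := hwd.differentiableAt (hU.mem_nhds hs)
    exact deriv_comp s h1 h2
  have h3 : deriv (deriv (fun s => f (w s))) a = deriv (fun s => deriv f (w s) * deriv w s) a :=
    hev.deriv_eq
  rw [h3]
  have hwa : HasDerivAt w (deriv w a) a :=
    ((hwd.differentiableAt (hU.mem_nhds ha))).hasDerivAt
  have hdfa : HasDerivAt (deriv f) (deriv (deriv f) (w a)) (w a) :=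
    ((hdf.differentiableOn (by simp)).differentiableAt
      (isOpen_Ioi.mem_nhds (hwpos a ha))).hasDerivAt
  have hdwa : HasDerivAt (deriv w) (deriv (deriv w) a) a :=
    ((hdw.differentiableOn (by simp)).differentiableAt (hU.mem_nhds ha)).hasDerivAt
  have h4 : HasDerivAt (fun s => deriv f (w s)) (deriv (deriv f) (w a) * deriv w a) a :=
    hdfa.comp a hwa
  have : deriv (fun s => deriv f (w s) * deriv w s) a = _ := (h4.mul hdwa).deriv
  rw [this]; ring

lemma xdir {γ : ℝ} (hγ : 0 < γ) {f : ℝ → ℝ} (hf : ContDiffOn ℝ (⊤ : ℕ∞) f (Set.Ioi 0))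
    {B C a : ℝ} (hC : 0 ≤ C) (ha : 0 < B + a ^ 2) :
    deriv (deriv (fun s => f (((B + s ^ 2) ^ (1 + γ) + C) ^ (1 / (2 + 2 * γ))))) a
      = deriv (deriv f) (((B + a ^ 2) ^ (1 + γ) + C) ^ (1 / (2 + 2 * γ)))
          * (a * (B + a ^ 2) ^ γ * ((B + a ^ 2) ^ (1 + γ) + C) ^ (1 / (2 + 2 * γ) - 1)) ^ 2
        + deriv f (((B + a ^ 2) ^ (1 + γ) + C) ^ (1 / (2 + 2 * γ)))
          * ((B + a ^ 2) ^ γ * ((B + a ^ 2) ^ (1 + γ) + C) ^ (1 / (2 + 2 * γ) - 1)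
             + 2 * γ * a ^ 2 * (B + a ^ 2) ^ (γ - 1)
                 * ((B + a ^ 2) ^ (1 + γ) + C) ^ (1 / (2 + 2 * γ) - 1)
             + 2 * (1 + γ) * (1 / (2 + 2 * γ) - 1) * a ^ 2 * ((B + a ^ 2) ^ γ) ^ 2
                 * ((B + a ^ 2) ^ (1 + γ) + C) ^ (1 / (2 + 2 * γ) - 2)) := by
  have h2γ : (0:ℝ) < 2 + 2 * γ := by linarith
  set α : ℝ := 1 / (2 + 2 * γ) with hαdef
  have hα : 2 * (1 + γ) * α = 1 := by rw [hαdef, mul_one_div, div_eq_one_iff_eq h2γ.ne']; ring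
  set U : Set ℝ := {s | 0 < B + s ^ 2} with hUdef
  have hU : IsOpen U := isOpen_lt continuous_const (by continuity)
  have haU : a ∈ U := ha
  set A : ℝ → ℝ := fun s => (B + s ^ 2) ^ (1 + γ) + C with hAdef
  have hApos : ∀ s ∈ U, 0 < A s := fun s hs =>
    add_pos_of_pos_of_nonneg (rpow_pos_of_pos hs _) hC
  set w : ℝ → ℝ := fun s => A s ^ α with hwdef
  have hwpos : ∀ s ∈ U, 0 < w s := fun s hs => rpow_pos_of_pos (hApos s hs) _
  have hw : ContDiffOn ℝ 2 w U := by
    intro s hs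
    have c1 : ContDiffAt ℝ 2 (fun s : ℝ => B + s ^ 2) s :=
      (contDiff_const.add (contDiff_id.pow 2)).contDiffAt
    have c2 : ContDiffAt ℝ 2 A s :=
      (c1.rpow_const_of_ne (ne_of_gt hs)).add contDiffAt_const
    exact (c2.rpow_const_of_ne (ne_of_gt (hApos s hs))).contDiffWithinAt
  have hAd : ∀ s : ℝ, 0 < B + s ^ 2 →
      HasDerivAt A (2 * s * (1 + γ) * (B + s ^ 2) ^ γ) s := by
    intro s hs
    have h1 : HasDerivAt (fun s : ℝ => B + s ^ 2) (2 * s) s := by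
      simpa using ((hasDerivAt_pow 2 s).const_add B)
    have h2 := (h1.rpow_const (p := 1 + γ) (Or.inl (ne_of_gt hs))).add_const C
    have e1 : (1 + γ) - 1 = γ := by ring
    rw [e1] at h2
    convert h2 using 1
  have hwd : ∀ s ∈ U, HasDerivAt w (s * (B + s ^ 2) ^ γ * A s ^ (α - 1)) s := by
    intro s hs
    have h4 := (hAd s hs).rpow_const (p := α) (Or.inl (ne_of_gt (hApos s hs)))
    have : 2 * s * (1 + γ) * (B + s ^ 2) ^ γ * α * A s ^ (α - 1)
        = s * (B + s ^ 2) ^ γ * A s ^ (α - 1) := by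
      linear_combination (s * (B + s ^ 2) ^ γ * A s ^ (α - 1)) * hα
    rw [← this]; exact h4
  set W1 : ℝ → ℝ := fun s => s * (B + s ^ 2) ^ γ * A s ^ (α - 1) with hW1def
  have hderiv_eq : deriv w =ᶠ[nhds a] W1 := by
    filter_upwards [hU.mem_nhds haU] with s hs
    exact (hwd s hs).deriv
  have hW1a : HasDerivAt W1
      ((1 * (B + a ^ 2) ^ γ + a * (2 * a * γ * (B + a ^ 2) ^ (γ - 1))) * A a ^ (α - 1)
        + a * (B + a ^ 2) ^ γ
          * (2 * a * (1 + γ) * (B + a ^ 2) ^ γ * (α - 1) * A a ^ (α - 1 - 1))) a := by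
    have h1 : HasDerivAt (fun s : ℝ => B + s ^ 2) (2 * a) a := by
      simpa using ((hasDerivAt_pow 2 a).const_add B)
    have g2 : HasDerivAt (fun s => (B + s ^ 2) ^ γ) (2 * a * γ * (B + a ^ 2) ^ (γ - 1)) a :=
      h1.rpow_const (Or.inl (ne_of_gt ha))
    have g3 : HasDerivAt (fun s => A s ^ (α - 1))
        (2 * a * (1 + γ) * (B + a ^ 2) ^ γ * (α - 1) * A a ^ (α - 1 - 1)) a :=
      (hAd a ha).rpow_const (Or.inl (ne_of_gt (hApos a haU)))
    exact (((hasDerivAt_id a).mul g2).mul g3)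
  have hdda : deriv (deriv w) a = deriv W1 a := hderiv_eq.deriv_eq
  have hmain := chain2' hf hU haU hw hwpos
  have hwa : deriv w a = W1 a := (hwd a haU).deriv
  rw [hmain, hwa, hdda, hW1a.deriv]
  have e2 : α - 1 - 1 = α - 2 := by ring
  rw [e2]
  show deriv (deriv f) (A a ^ α) * _ + deriv f (A a ^ α) * _
      = deriv (deriv f) (A a ^ α) * _ + deriv f (A a ^ α) * _
  ring

lemma ydir {γ : ℝ} (hγ : 0 < γ) {f : ℝ → ℝ} (hf : ContDiffOn ℝ (⊤ : ℕ∞) f (Set.Ioi 0))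
    {E D a : ℝ} (hpos : 0 < E + (1 + γ) ^ 2 * (D + a ^ 2)) :
    deriv (deriv (fun t => f ((E + (1 + γ) ^ 2 * (D + t ^ 2)) ^ (1 / (2 + 2 * γ))))) a
      = deriv (deriv f) ((E + (1 + γ) ^ 2 * (D + a ^ 2)) ^ (1 / (2 + 2 * γ)))
          * ((1 + γ) * a * (E + (1 + γ) ^ 2 * (D + a ^ 2)) ^ (1 / (2 + 2 * γ) - 1)) ^ 2
        + deriv f ((E + (1 + γ) ^ 2 * (D + a ^ 2)) ^ (1 / (2 + 2 * γ)))
          * ((1 + γ) * (E + (1 + γ) ^ 2 * (D + a ^ 2)) ^ (1 / (2 + 2 * γ) - 1)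
             + 2 * (1 + γ) ^ 3 * (1 / (2 + 2 * γ) - 1) * a ^ 2
                 * (E + (1 + γ) ^ 2 * (D + a ^ 2)) ^ (1 / (2 + 2 * γ) - 2)) := by
  have h2γ : (0:ℝ) < 2 + 2 * γ := by linarith
  set α : ℝ := 1 / (2 + 2 * γ) with hαdef
  have hα : 2 * (1 + γ) * α = 1 := by rw [hαdef, mul_one_div, div_eq_one_iff_eq h2γ.ne']; ring
  set A : ℝ → ℝ := fun t => E + (1 + γ) ^ 2 * (D + t ^ 2) with hAdef
  set U : Set ℝ := {t | 0 < A t} with hUdef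
  have hAc : Continuous A := by fun_prop
  have hU : IsOpen U := isOpen_lt continuous_const hAc
  have haU : a ∈ U := hpos
  set w : ℝ → ℝ := fun t => A t ^ α with hwdef
  have hwpos : ∀ t ∈ U, 0 < w t := fun t ht => rpow_pos_of_pos ht _
  have hw : ContDiffOn ℝ 2 w U := by
    intro t ht
    have c1 : ContDiffAt ℝ 2 A t :=
      (contDiff_const.add (contDiff_const.mul (contDiff_const.add (contDiff_id.pow 2)))).contDiffAt
    exact (c1.rpow_const_of_ne (ne_of_gt ht)).contDiffWithinAt
  have hAd : ∀ t : ℝ, HasDerivAt A (2 * t * (1 + γ) ^ 2) t := by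
    intro t
    have h1 : HasDerivAt (fun t : ℝ => D + t ^ 2) (2 * t) t := by
      simpa using ((hasDerivAt_pow 2 t).const_add D)
    have := (h1.const_mul ((1 + γ) ^ 2)).const_add E
    exact this.congr_deriv (by ring)
  have hwd : ∀ t ∈ U, HasDerivAt w ((1 + γ) * t * A t ^ (α - 1)) t := by
    intro t ht
    have h4 := (hAd t).rpow_const (p := α) (Or.inl (ne_of_gt ht))
    have : 2 * t * (1 + γ) ^ 2 * α * A t ^ (α - 1) = (1 + γ) * t * A t ^ (α - 1) := by
      linear_combination ((1 + γ) * t * A t ^ (α - 1)) * hα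
    rw [← this]; exact h4
  set W1 : ℝ → ℝ := fun t => (1 + γ) * t * A t ^ (α - 1) with hW1def
  have hderiv_eq : deriv w =ᶠ[nhds a] W1 := by
    filter_upwards [hU.mem_nhds haU] with t ht
    exact (hwd t ht).deriv
  have hW1a : HasDerivAt W1
      (((1 + γ) * 1) * A a ^ (α - 1)
        + ((1 + γ) * a) * (2 * a * (1 + γ) ^ 2 * (α - 1) * A a ^ (α - 1 - 1))) a := by
    have g1 : HasDerivAt (fun t : ℝ => (1 + γ) * t) ((1 + γ) * 1) a :=
      (hasDerivAt_id a).const_mul _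
    have g3 : HasDerivAt (fun t => A t ^ (α - 1))
        (2 * a * (1 + γ) ^ 2 * (α - 1) * A a ^ (α - 1 - 1)) a :=
      (hAd a).rpow_const (Or.inl (ne_of_gt hpos))
    exact g1.mul g3
  have hmain := chain2' hf hU haU hw hwpos
  have hwa : deriv w a = W1 a := (hwd a haU).deriv
  rw [hmain, hwa, hderiv_eq.deriv_eq, hW1a.deriv]
  have e2 : α - 1 - 1 = α - 2 := by ring
  rw [e2]
  show deriv (deriv f) (A a ^ α) * _ + deriv f (A a ^ α) * _
      = deriv (deriv f) (A a ^ α) * _ + deriv f (A a ^ α) * _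
  ring

lemma nrm_sq {n : ℕ} (v : Fin n → ℝ) : nrm v ^ 2 = ∑ i, v i ^ 2 :=
  Real.sq_sqrt (Finset.sum_nonneg fun i _ => sq_nonneg _)

lemma nrm_rpow {n : ℕ} (v : Fin n → ℝ) (c : ℝ) :
    nrm v ^ (2 * c) = (∑ i, v i ^ 2) ^ c := by
  have hnn : (0:ℝ) ≤ nrm v := Real.sqrt_nonneg _
  rw [show (2 : ℝ) * c = ((2 : ℕ) : ℝ) * c by norm_num,
    Real.rpow_natCast_mul hnn, nrm_sq]

lemma rho_eq (n k : ℕ) (γ : ℝ) (x : Fin n → ℝ) (y : Fin k → ℝ) :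
    rhoGru n k γ x y
      = ((∑ i, x i ^ 2) ^ (1 + γ) + (1 + γ) ^ 2 * ∑ j, y j ^ 2) ^ (1 / (2 + 2 * γ)) := by
  rw [rhoGru, nrm_rpow, nrm_sq]

lemma sum_sq_update {n : ℕ} (x : Fin n → ℝ) (i : Fin n) (s : ℝ) :
    ∑ j, (Function.update x i s) j ^ 2 = (∑ j, x j ^ 2) - x i ^ 2 + s ^ 2 := by
  have h1 : ∀ j, (Function.update x i s) j ^ 2
      = Function.update (fun j => x j ^ 2) i (s ^ 2) j :=
    fun j => Function.apply_update (fun _ t => t ^ 2) x i s j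
  rw [Finset.sum_congr rfl fun j _ => h1 j,
    Finset.sum_update_of_mem (Finset.mem_univ i),
    Finset.sum_sdiff_eq_sub (Finset.subset_univ {i}), Finset.sum_singleton]
  ring


set_option maxHeartbeats 2000000 in
/-- for smooth `f : (0,∞) → ℝ`, at points with `x ≠ 0`, `ρ ≠ 0`,
`Δ_𝒳 f(ρ) = (|x|^{2γ}/ρ^{2γ})(f''(ρ) + ((Q-1)/ρ) f'(ρ))`, `Q = n + (1+γ)k`. -/
theorem stmt12 (n k : ℕ) (γ : ℝ) (hγ : 0 < γ)
    (f : ℝ → ℝ) (hf : ContDiffOn ℝ (⊤ : ℕ∞) f (Set.Ioi 0))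
    (x : Fin n → ℝ) (y : Fin k → ℝ) (hx : x ≠ 0) (hρ : rhoGru n k γ x y ≠ 0) :
    DeltaGru γ (fun a b => f (rhoGru n k γ a b)) x y
      = nrm x ^ (2 * γ) / rhoGru n k γ x y ^ (2 * γ)
        * (deriv (deriv f) (rhoGru n k γ x y)
          + (((n : ℝ) + (1 + γ) * (k : ℝ)) - 1) / rhoGru n k γ x y
            * deriv f (rhoGru n k γ x y)) := by
  have h2γ : (0:ℝ) < 2 + 2 * γ := by linarith
  have hR : 0 < ∑ i, x i ^ 2 := by
    obtain ⟨i, hi⟩ := Function.ne_iff.mp hx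
    have : 0 < x i ^ 2 := lt_of_le_of_ne (sq_nonneg _) (Ne.symm (pow_ne_zero 2 hi))
    exact lt_of_lt_of_le this
      (Finset.single_le_sum (fun j _ => sq_nonneg (x j)) (Finset.mem_univ i))
  have hS : 0 ≤ ∑ j, y j ^ 2 := Finset.sum_nonneg fun j _ => sq_nonneg _
  set R : ℝ := ∑ i, x i ^ 2 with hRdef
  set S : ℝ := ∑ j, y j ^ 2 with hSdef
  have hA0 : 0 < R ^ (1 + γ) + (1 + γ) ^ 2 * S := by
    have h1 : 0 < R ^ (1 + γ) := Real.rpow_pos_of_pos hR _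
    have h2 : 0 ≤ (1 + γ) ^ 2 * S := mul_nonneg (sq_nonneg _) hS
    linarith
  set α : ℝ := 1 / (2 + 2 * γ) with hαdef
  set A0 : ℝ := R ^ (1 + γ) + (1 + γ) ^ 2 * S with hA0def
  set F2 : ℝ := deriv (deriv f) (A0 ^ α) with hF2def
  set F1 : ℝ := deriv f (A0 ^ α) with hF1def
  -- per-coordinate second derivatives
  have hxi : ∀ i : Fin n,
      deriv (deriv fun s => f (rhoGru n k γ (Function.update x i s) y)) (x i)
        = (F2 * (R ^ γ) ^ 2 * (A0 ^ (α - 1)) ^ 2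
            + F1 * (2 * γ * R ^ (γ - 1) * A0 ^ (α - 1)
                + 2 * (1 + γ) * (α - 1) * (R ^ γ) ^ 2 * A0 ^ (α - 2))) * x i ^ 2
          + F1 * (R ^ γ * A0 ^ (α - 1)) := by
    intro i
    have hfun : (fun s => f (rhoGru n k γ (Function.update x i s) y))
        = fun s => f (((R - x i ^ 2 + s ^ 2) ^ (1 + γ) + (1 + γ) ^ 2 * S) ^ (1 / (2 + 2 * γ))) := by
      funext s
      rw [rho_eq, sum_sq_update]
    have hpos : 0 < R - x i ^ 2 + x i ^ 2 := by
      rw [show R - x i ^ 2 + x i ^ 2 = R from by ring]; exact hR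
    have hx2 := xdir hγ hf (B := R - x i ^ 2) (C := (1 + γ) ^ 2 * S)
      (mul_nonneg (sq_nonneg _) hS) hpos
    rw [show R - x i ^ 2 + x i ^ 2 = R from by ring] at hx2
    rw [hfun, hx2]
    rw [hF2def, hF1def, hA0def, hαdef]
    ring
  have hyj : ∀ j : Fin k,
      deriv (deriv fun t => f (rhoGru n k γ x (Function.update y j t))) (y j)
        = (F2 * (1 + γ) ^ 2 * (A0 ^ (α - 1)) ^ 2
            + F1 * (2 * (1 + γ) ^ 3 * (α - 1) * A0 ^ (α - 2))) * y j ^ 2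
          + F1 * ((1 + γ) * A0 ^ (α - 1)) := by
    intro j
    have hfun : (fun t => f (rhoGru n k γ x (Function.update y j t)))
        = fun t => f ((R ^ (1 + γ) + (1 + γ) ^ 2 * (S - y j ^ 2 + t ^ 2)) ^ (1 / (2 + 2 * γ))) := by
      funext t
      rw [rho_eq, sum_sq_update]
    have hpos : 0 < R ^ (1 + γ) + (1 + γ) ^ 2 * (S - y j ^ 2 + y j ^ 2) := by
      rw [show S - y j ^ 2 + y j ^ 2 = S from by ring]; exact hA0
    have hy2 := ydir hγ hf (E := R ^ (1 + γ)) (D := S - y j ^ 2) hpos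
    rw [show S - y j ^ 2 + y j ^ 2 = S from by ring] at hy2
    rw [hfun, hy2]
    rw [hF2def, hF1def, hA0def, hαdef]
    ring
  -- sum them up
  have hxsum : (∑ i, deriv (deriv fun s => f (rhoGru n k γ (Function.update x i s) y)) (x i))
      = (F2 * (R ^ γ) ^ 2 * (A0 ^ (α - 1)) ^ 2
            + F1 * (2 * γ * R ^ (γ - 1) * A0 ^ (α - 1)
                + 2 * (1 + γ) * (α - 1) * (R ^ γ) ^ 2 * A0 ^ (α - 2))) * R
          + (n : ℝ) * (F1 * (R ^ γ * A0 ^ (α - 1))) := by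
    rw [Finset.sum_congr rfl fun i _ => hxi i, Finset.sum_add_distrib,
      ← Finset.mul_sum, Finset.sum_const, Finset.card_univ, Fintype.card_fin,
      nsmul_eq_mul, ← hRdef]
  have hysum : (∑ j, deriv (deriv fun t => f (rhoGru n k γ x (Function.update y j t))) (y j))
      = (F2 * (1 + γ) ^ 2 * (A0 ^ (α - 1)) ^ 2
            + F1 * (2 * (1 + γ) ^ 3 * (α - 1) * A0 ^ (α - 2))) * S
          + (k : ℝ) * (F1 * ((1 + γ) * A0 ^ (α - 1))) := by
    rw [Finset.sum_congr rfl fun j _ => hyj j, Finset.sum_add_distrib,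
      ← Finset.mul_sum, Finset.sum_const, Finset.card_univ, Fintype.card_fin,
      nsmul_eq_mul, ← hSdef]
  have hρeq : rhoGru n k γ x y = A0 ^ α := by
    rw [rho_eq, ← hRdef, ← hSdef, ← hA0def, ← hαdef]
  simp only [DeltaGru]
  rw [hρeq, ← hF2def, ← hF1def, hxsum, hysum, nrm_rpow x γ, ← hRdef]
  -- now pure rpow algebra
  have hA0ne : A0 ≠ 0 := ne_of_gt hA0
  have hRne : R ≠ 0 := ne_of_gt hR
  have hPne : A0 ^ (α - 1) ≠ 0 := ne_of_gt (Real.rpow_pos_of_pos hA0 _)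
  have hG1 : R ^ (γ - 1) = R ^ γ / R := by
    rw [Real.rpow_sub hR, Real.rpow_one]
  have hP2 : A0 ^ (α - 2) = A0 ^ (α - 1) / A0 := by
    rw [show α - 2 = α - 1 - 1 from by ring, Real.rpow_sub hA0, Real.rpow_one]
  have h4 : A0 ^ α = A0 ^ (α - 1) * A0 := by
    rw [← Real.rpow_add_one hA0ne (α - 1), show α - 1 + 1 = α from by ring]
  have h5 : (A0 ^ α) ^ (2 * γ) = A0 / (A0 ^ α) ^ 2 := by
    have e1 : (A0 ^ α) ^ (2 * γ) = A0 ^ (α * (2 * γ)) :=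
      (Real.rpow_mul (le_of_lt hA0) _ _).symm
    have e2 : (A0 ^ α) ^ (2 : ℕ) = A0 ^ (α * (2 : ℕ)) := by
      rw [← Real.rpow_natCast (A0 ^ α) 2, ← Real.rpow_mul (le_of_lt hA0)]
    have hden : A0 ^ (α * (2 : ℕ)) ≠ 0 := ne_of_gt (Real.rpow_pos_of_pos hA0 _)
    rw [e1, e2, eq_div_iff hden, ← Real.rpow_add hA0,
      show α * (2 * γ) + α * (2 : ℕ) = 1 from by rw [hαdef]; push_cast; field_simp; ring,
      Real.rpow_one]

  have hH : R ^ (1 + γ) = R * R ^ γ := by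
    rw [Real.rpow_add hR, Real.rpow_one]
  have hA0' : A0 = R * R ^ γ + (1 + γ) ^ 2 * S := by rw [hA0def, hH]
  have hGpos : 0 < R ^ γ := Real.rpow_pos_of_pos hR _
  have hPpos : 0 < A0 ^ (α - 1) := Real.rpow_pos_of_pos hA0 _
  rw [h5, hG1, hP2, h4]
  clear_value F1 F2
  generalize hGG : R ^ γ = G at hA0' hGpos ⊢
  generalize hPP : A0 ^ (α - 1) = P at hPpos ⊢
  have hA0v : 0 < R * G + (1 + γ) ^ 2 * S := hA0' ▸ hA0
  rw [hA0']
  simp only [hαdef]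
  field_simp
  ring
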